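/- F′(b) > 0 for all real b ≥ 6/5 (= 1.2). -/

import Mathlib

/-- The restriction of `A2` to the diagonal. -/
noncomputable def F (b : ℝ) : ℝ :=
  (9 + 96*b + 396*b^2 + 840*b^3 + 954*b^4 + 528*b^5 + 96*b^6) /
  (1 + 12*b + 54*b^2 + 120*b^3 + 138*b^4 + 72*b^5 + 12*b^6)

/-- `F' b > 0` for all `b ≥ 6/5`. -/
theorem deriv_F_pos_of_ge (b : ℝ) (hb : 6/5 ≤ b) : 0 < deriv F b := by
  have hb0 : (0:ℝ) < b := by linarith
  have hD : (0:ℝ) < 1 + 12*b + 54*b^2 + 120*b^3 + 138*b^4 + 72*b^5 + 12*b^6 := by positivity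
  have hN : HasDerivAt (fun x : ℝ =>
      9 + 96*x + 396*x^2 + 840*x^3 + 954*x^4 + 528*x^5 + 96*x^6)
      (96 + 792*b + 2520*b^2 + 3816*b^3 + 2640*b^4 + 576*b^5) b := by
    have h := ((((((hasDerivAt_const b (9:ℝ)).add
      ((hasDerivAt_id b).const_mul 96)).add
      ((hasDerivAt_pow 2 b).const_mul 396)).add
      ((hasDerivAt_pow 3 b).const_mul 840)).add
      ((hasDerivAt_pow 4 b).const_mul 954)).add
      ((hasDerivAt_pow 5 b).const_mul 528)).add
      ((hasDerivAt_pow 6 b).const_mul 96)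
    refine h.congr_deriv ?_
    push_cast
    ring
  have hDen : HasDerivAt (fun x : ℝ =>
      1 + 12*x + 54*x^2 + 120*x^3 + 138*x^4 + 72*x^5 + 12*x^6)
      (12 + 108*b + 360*b^2 + 552*b^3 + 360*b^4 + 72*b^5) b := by
    have h := ((((((hasDerivAt_const b (1:ℝ)).add
      ((hasDerivAt_id b).const_mul 12)).add
      ((hasDerivAt_pow 2 b).const_mul 54)).add
      ((hasDerivAt_pow 3 b).const_mul 120)).add
      ((hasDerivAt_pow 4 b).const_mul 138)).add
      ((hasDerivAt_pow 5 b).const_mul 72)).add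
      ((hasDerivAt_pow 6 b).const_mul 12)
    refine h.congr_deriv ?_
    push_cast
    ring
  have hF : HasDerivAt F
      (((96 + 792*b + 2520*b^2 + 3816*b^3 + 2640*b^4 + 576*b^5) *
        (1 + 12*b + 54*b^2 + 120*b^3 + 138*b^4 + 72*b^5 + 12*b^6) -
        (9 + 96*b + 396*b^2 + 840*b^3 + 954*b^4 + 528*b^5 + 96*b^6) *
        (12 + 108*b + 360*b^2 + 552*b^3 + 360*b^4 + 72*b^5)) /
        (1 + 12*b + 54*b^2 + 120*b^3 + 138*b^4 + 72*b^5 + 12*b^6)^2) b :=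
    hN.div hDen hD.ne'
  rw [hF.deriv]
  apply div_pos _ (by positivity)
  have hc : (0:ℝ) ≤ b - 6/5 := by linarith
  nlinarith [pow_nonneg hc 2, pow_nonneg hc 3, pow_nonneg hc 4, pow_nonneg hc 5,
    pow_nonneg hc 6, pow_nonneg hc 7, pow_nonneg hc 8, pow_nonneg hc 9,
    pow_nonneg hc 10, sq_nonneg (b - 6/5)]
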